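/- Let ρ, σ be density matrices, β ∈ (0,1], and f: ℝ → [0,1] with f(x)=0 for x<α and f(x)=1 for x≥β (0 ≤ α ≤ β). Then F(ρ,σ) - F(f(ρ)·ρ, σ) ≤ sqrt(Tr[Π_{[0,β)}ρΠ_{[0,β)}]) · sqrt(Tr[Π_{[0,β)}σΠ_{[0,β)}]), where Π_{[0,β)} is the spectral projector of ρ onto eigenvalues in [0,β). -/

import Mathlib

open Matrix ComplexOrder

attribute [local instance] Classical.propDecidable

/-- Square root of a positive semidefinite matrix (junk value `0` otherwise). -/
noncomputable def psqrt {d : ℕ} (X : Matrix (Fin d) (Fin d) ℂ) : Matrix (Fin d) (Fin d) ℂ :=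
  if h : X.PosSemidef then
    h.1.eigenvectorUnitary.1 * diagonal ((↑) ∘ (√·) ∘ h.1.eigenvalues) *
      (star h.1.eigenvectorUnitary : Matrix (Fin d) (Fin d) ℂ)
  else 0

/-- Schatten 1-norm (trace norm): `‖M‖₁ = Tr √(Mᴴ M)`. -/
noncomputable def traceNorm {d : ℕ} (M : Matrix (Fin d) (Fin d) ℂ) : ℝ :=
  (psqrt (Mᴴ * M)).trace.re

/-- Fidelity `F(X, σ) = Tr √(√σ X √σ)` of positive semidefinite matrices. -/
noncomputable def fid {d : ℕ} (X σ : Matrix (Fin d) (Fin d) ℂ) : ℝ :=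
  (psqrt (psqrt σ * X * psqrt σ)).trace.re

/-!
Write `F(X, σ) = ‖√X √σ‖₁`. The trace norm is `‖M‖₁ = max {Re Tr (C M) : C Cᴴ ≤ 1}`, the maximum
being attained at `C = |M|⁺ Mᴴ`; this gives the triangle inequality and the Cauchy–Schwarz bound
`‖Xᴴ Y‖₁ ≤ ‖X‖₂ ‖Y‖₂`. For the spectral projector `Π = 1_{[β,∞)}(ρ) = 1 - Π_{[0,β)}`, which commutes
with `ρ`, split `√ρ √σ = Π √ρ √σ + (1 - Π) √ρ √σ`: the first term has trace norm `F(ΠρΠ, σ)`, and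
Cauchy–Schwarz bounds the second by `√Tr[(1-Π)ρ(1-Π)] √Tr[(1-Π)σ(1-Π)]`. Finally `ΠρΠ ≤ f(ρ) ρ`
because `0 ≤ f` and `f = 1` on `[β, ∞)`, and the fidelity is monotone since the operator square
root is.
-/

open scoped MatrixOrder Matrix.Norms.L2Operator

namespace Matrix

variable {𝕜 n : Type*} [RCLike 𝕜] [Fintype n]

lemma re_trace_mono {A B : Matrix n n 𝕜} (h : A ≤ B) : RCLike.re A.trace ≤ RCLike.re B.trace := by
  have := (le_iff.mp h).trace_nonneg
  rw [trace_sub, sub_nonneg] at this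
  exact RCLike.re_le_re this

lemma re_trace_nonneg {A : Matrix n n 𝕜} (h : 0 ≤ A) : 0 ≤ RCLike.re A.trace := by
  simpa using re_trace_mono h

variable [DecidableEq n]

lemma re_trace_mul_conjTranspose_le (X Y : Matrix n n 𝕜) :
    RCLike.re (X * Yᴴ).trace ≤
      √(RCLike.re (X * Xᴴ).trace) * √(RCLike.re (Y * Yᴴ).trace) := by
  -- the Hilbert–Schmidt inner product `⟪Y, X⟫ = Tr (X Yᴴ)`
  let := toMatrixSeminormedAddCommGroup (1 : Matrix n n 𝕜) PosSemidef.one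
  let := toMatrixInnerProductSpace (1 : Matrix n n 𝕜) PosSemidef.one
  have h := re_inner_le_norm (𝕜 := 𝕜) Y X
  rw [norm_eq_sqrt_re_inner (𝕜 := 𝕜) Y, norm_eq_sqrt_re_inner (𝕜 := 𝕜) X, mul_comm] at h
  change RCLike.re (X * 1 * Yᴴ).trace ≤
    √(RCLike.re (X * 1 * Xᴴ).trace) * √(RCLike.re (Y * 1 * Yᴴ).trace) at h
  simpa only [Matrix.mul_one] using h

namespace IsHermitian

variable {A : Matrix n n 𝕜} (hA : A.IsHermitian)

lemma cfc_mul (f g : ℝ → ℝ) : hA.cfc f * hA.cfc g = hA.cfc (fun x => f x * g x) := by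
  simp only [IsHermitian.cfc, ← map_mul, diagonal_mul_diagonal]
  congr; funext; simp

lemma cfc_sub (f g : ℝ → ℝ) : hA.cfc f - hA.cfc g = hA.cfc (fun x => f x - g x) := by
  simp only [IsHermitian.cfc, ← map_sub, diagonal_sub]
  congr; funext; simp

lemma cfc_one : hA.cfc (fun _ => 1) = 1 := by
  simp [IsHermitian.cfc, Function.comp_def]

lemma cfc_zero : hA.cfc (fun _ => 0) = 0 := by
  simp [IsHermitian.cfc, Function.comp_def]

lemma cfc_self : hA.cfc (fun x => x) = A := by
  rw [← hA.cfc_eq, cfc_id' ℝ A]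

lemma isHermitian_cfc (f : ℝ → ℝ) : (hA.cfc f).IsHermitian := by
  rw [← hA.cfc_eq]; exact cfc_predicate f A

lemma posSemidef_cfc {f : ℝ → ℝ} (hf : ∀ i, 0 ≤ f (hA.eigenvalues i)) : (hA.cfc f).PosSemidef := by
  simp only [IsHermitian.cfc, Unitary.conjStarAlgAut_apply, star_eq_conjTranspose]
  refine (posSemidef_diagonal_iff.mpr fun i => ?_).mul_mul_conjTranspose_same _
  simpa using hf i

lemma cfc_mul_self (f : ℝ → ℝ) : hA.cfc f * A = hA.cfc (fun x => f x * x) := by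
  rw [← hA.cfc_mul, hA.cfc_self]

lemma cfc_mul_mul_cfc (f g : ℝ → ℝ) :
    hA.cfc f * A * hA.cfc g = hA.cfc (fun x => f x * x * g x) := by
  rw [hA.cfc_mul_self, hA.cfc_mul]

end IsHermitian

namespace PosSemidef

variable {A : Matrix n n 𝕜} (hA : A.PosSemidef)

lemma cfc_congr {f g : ℝ → ℝ} (h : ∀ x, 0 ≤ x → f x = g x) : hA.1.cfc f = hA.1.cfc g := by
  simp only [IsHermitian.cfc]
  congr 2
  funext i
  simp [h _ (hA.eigenvalues_nonneg i)]

lemma cfc_le_cfc {f g : ℝ → ℝ} (h : ∀ x, 0 ≤ x → f x ≤ g x) : hA.1.cfc f ≤ hA.1.cfc g := by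
  rw [le_iff, hA.1.cfc_sub]
  exact hA.1.posSemidef_cfc fun i => sub_nonneg.mpr (h _ (hA.eigenvalues_nonneg i))

end PosSemidef

lemma mul_cfc_conjTranspose_mul_self_eq_self (M : Matrix n n 𝕜) {g : ℝ → ℝ}
    (hg : ∀ x, 0 < x → g x = 1) : M * (posSemidef_conjTranspose_mul_self M).1.cfc g = M := by
  set hH := posSemidef_conjTranspose_mul_self M
  have hker : hH.1.cfc (fun x => 1 - g x) * (Mᴴ * M) * hH.1.cfc (fun x => 1 - g x) = 0 := by
    rw [hH.1.cfc_mul_mul_cfc, ← hH.1.cfc_zero]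
    refine hH.cfc_congr fun x hx => ?_
    rcases hx.eq_or_lt with rfl | hx
    · simp
    · simp [hg x hx]
  have : M * hH.1.cfc (fun x => 1 - g x) = 0 := by
    rw [← conjTranspose_mul_self_eq_zero, conjTranspose_mul, (hH.1.isHermitian_cfc _).eq, ← hker]
    simp only [Matrix.mul_assoc]
  rwa [← hH.1.cfc_sub, hH.1.cfc_one, Matrix.mul_sub, Matrix.mul_one, sub_eq_zero, eq_comm] at this

end Matrix

lemma CFC.sqrt_mul_mul_eq_mul_sqrt {A : Type*} [CStarAlgebra A] [PartialOrder A]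
    [StarOrderedRing A] {a p : A} (ha : 0 ≤ a) (hp : IsStarProjection p) (hpa : Commute p a) :
    CFC.sqrt (p * a * p) = p * CFC.sqrt a := by
  have hc : Commute p (CFC.sqrt a) := (hpa.symm.cfcₙ_nnreal _).symm
  have hp' : star p = p := hp.isSelfAdjoint.star_eq
  have hconj : p * CFC.sqrt a = star p * CFC.sqrt a * p := by
    rw [hp', mul_assoc, ← hc.eq, ← mul_assoc, hp.isIdempotentElem.eq]
  have hpap : 0 ≤ p * a * p := by simpa only [hp'] using star_left_conjugate_nonneg ha p
  rw [CFC.sqrt_eq_iff _ _ hpap (hconj ▸ star_left_conjugate_nonneg (CFC.sqrt_nonneg a) p)]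
  calc p * CFC.sqrt a * (p * CFC.sqrt a) = p * p * (CFC.sqrt a * CFC.sqrt a) := by
        rw [mul_assoc, ← mul_assoc (CFC.sqrt a), ← hc.eq]; simp only [mul_assoc]
    _ = p * a * p := by
        rw [hp.isIdempotentElem.eq, CFC.sqrt_mul_sqrt_self a ha, mul_assoc, ← hpa.eq,
          ← mul_assoc, hp.isIdempotentElem.eq]

section TraceNorm

variable {d : ℕ}

lemma psqrt_eq_sqrt (X : Matrix (Fin d) (Fin d) ℂ) : psqrt X = CFC.sqrt X := by
  by_cases hX : X.PosSemidef
  · rw [psqrt, dif_pos hX, CFC.sqrt_eq_real_sqrt X hX.nonneg, cfcₙ_eq_cfc, hX.1.cfc_eq]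
    rfl
  · rw [psqrt, dif_neg hX, CFC.sqrt_of_not_nonneg]
    rwa [nonneg_iff_posSemidef]

lemma conjTranspose_sqrt (Y : Matrix (Fin d) (Fin d) ℂ) : (CFC.sqrt Y)ᴴ = CFC.sqrt Y :=
  (CFC.sqrt_nonneg Y).isSelfAdjoint.star_eq

lemma psqrt_eq_cfc {X : Matrix (Fin d) (Fin d) ℂ} (hX : X.PosSemidef) :
    psqrt X = hX.1.cfc Real.sqrt := by
  rw [psqrt, dif_pos hX]
  rfl

lemma traceNorm_eq_cfc (M : Matrix (Fin d) (Fin d) ℂ) :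
    traceNorm M = ((posSemidef_conjTranspose_mul_self M).1.cfc Real.sqrt).trace.re := by
  rw [traceNorm, psqrt_eq_cfc (posSemidef_conjTranspose_mul_self M)]

lemma traceNorm_nonneg (M : Matrix (Fin d) (Fin d) ℂ) : 0 ≤ traceNorm M := by
  rw [traceNorm, psqrt_eq_sqrt]
  exact re_trace_nonneg (CFC.sqrt_nonneg (Mᴴ * M))

lemma re_trace_mul_le_traceNorm (M : Matrix (Fin d) (Fin d) ℂ) {C : Matrix (Fin d) (Fin d) ℂ}
    (hC : C * Cᴴ ≤ 1) : (C * M).trace.re ≤ traceNorm M := by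
  set hH := posSemidef_conjTranspose_mul_self M
  -- `Q = |M|^{1/2}` and, as `0⁻¹ = 0`, `K` is its pseudo-inverse.
  set Q := hH.1.cfc fun x => √√x
  set K := hH.1.cfc fun x => (√√x)⁻¹
  have hQ : Qᴴ = Q := (hH.1.isHermitian_cfc _).eq
  have hK : Kᴴ = K := (hH.1.isHermitian_cfc _).eq
  have hQQ : traceNorm M = (Q * Q).trace.re := by
    rw [traceNorm_eq_cfc, hH.1.cfc_mul,
      hH.cfc_congr fun x _ => (Real.mul_self_sqrt (Real.sqrt_nonneg x)).symm]
  have hKHK : K * (Mᴴ * M) * K = Q * Q := by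
    rw [hH.1.cfc_mul_mul_cfc, hH.1.cfc_mul]
    refine hH.cfc_congr fun x _ => ?_
    rw [mul_right_comm, ← mul_inv, Real.mul_self_sqrt (Real.sqrt_nonneg x), inv_mul_eq_div,
      Real.div_sqrt]
  have hMKQ : M * K * Q = M := by
    rw [Matrix.mul_assoc, hH.1.cfc_mul]
    exact mul_cfc_conjTranspose_mul_self_eq_self M fun x hx => inv_mul_cancel₀ (by positivity)
  have hQCCQ : Q * C * (Q * C)ᴴ ≤ Q * Q := by
    calc Q * C * (Q * C)ᴴ = star Q * (C * Cᴴ) * Q := by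
          rw [star_eq_conjTranspose, hQ, conjTranspose_mul, hQ]
          simp only [Matrix.mul_assoc]
      _ ≤ star Q * 1 * Q := star_left_conjugate_le_conjugate hC Q
      _ = Q * Q := by rw [Matrix.mul_one, star_eq_conjTranspose, hQ]
  calc (C * M).trace.re = (Q * (C * M * K)).trace.re := by
        rw [trace_mul_comm Q, Matrix.mul_assoc, Matrix.mul_assoc, ← Matrix.mul_assoc M, hMKQ]
    _ = (Q * C * (K * Mᴴ)ᴴ).trace.re := by
        rw [conjTranspose_mul, hK, conjTranspose_conjTranspose]
        simp only [Matrix.mul_assoc]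
    _ ≤ √(Q * C * (Q * C)ᴴ).trace.re * √(K * Mᴴ * (K * Mᴴ)ᴴ).trace.re :=
        re_trace_mul_conjTranspose_le (Q * C) (K * Mᴴ)
    _ ≤ √(Q * Q).trace.re * √(Q * Q).trace.re := by
        refine mul_le_mul (Real.sqrt_le_sqrt (re_trace_mono hQCCQ)) (le_of_eq ?_)
          (Real.sqrt_nonneg _) (Real.sqrt_nonneg _)
        rw [conjTranspose_mul, hK, conjTranspose_conjTranspose, ← hKHK]
        simp only [Matrix.mul_assoc]
    _ = traceNorm M := by
        rw [← hQQ, Real.mul_self_sqrt (traceNorm_nonneg M)]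

lemma exists_re_trace_mul_eq_traceNorm (M : Matrix (Fin d) (Fin d) ℂ) :
    ∃ C : Matrix (Fin d) (Fin d) ℂ, C * Cᴴ ≤ 1 ∧ (C * M).trace.re = traceNorm M := by
  set hH := posSemidef_conjTranspose_mul_self M
  -- `K = |M|⁺` as `0⁻¹ = 0`, so `K Mᴴ` is the adjoint of the polar part of `M`.
  set K := hH.1.cfc fun x => (√x)⁻¹
  have hK : Kᴴ = K := (hH.1.isHermitian_cfc _).eq
  refine ⟨K * Mᴴ, ?_, ?_⟩
  · have hCC : K * Mᴴ * (K * Mᴴ)ᴴ = hH.1.cfc fun x => (√x)⁻¹ * x * (√x)⁻¹ := by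
      rw [conjTranspose_mul, hK, conjTranspose_conjTranspose, ← hH.1.cfc_mul_mul_cfc]
      simp only [Matrix.mul_assoc]
      rfl
    rw [hCC, ← hH.1.cfc_one]
    refine hH.cfc_le_cfc fun x hx => ?_
    rcases hx.eq_or_lt with rfl | hx
    · simp
    · rw [mul_right_comm, ← mul_inv, Real.mul_self_sqrt hx.le, inv_mul_cancel₀ hx.ne']
  · rw [traceNorm_eq_cfc, Matrix.mul_assoc, hH.1.cfc_mul_self,
      hH.cfc_congr fun x _ => by rw [inv_mul_eq_div, Real.div_sqrt]]

lemma traceNorm_add_le (M N : Matrix (Fin d) (Fin d) ℂ) :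
    traceNorm (M + N) ≤ traceNorm M + traceNorm N := by
  obtain ⟨C, hC, hCMN⟩ := exists_re_trace_mul_eq_traceNorm (M + N)
  rw [← hCMN, Matrix.mul_add, trace_add, Complex.add_re]
  exact add_le_add (re_trace_mul_le_traceNorm M hC) (re_trace_mul_le_traceNorm N hC)

lemma traceNorm_conjTranspose_mul_le (X Y : Matrix (Fin d) (Fin d) ℂ) :
    traceNorm (Xᴴ * Y) ≤ √(X * Xᴴ).trace.re * √(Y * Yᴴ).trace.re := by
  obtain ⟨C, hC, hCXY⟩ := exists_re_trace_mul_eq_traceNorm (Xᴴ * Y)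
  have hYC : Y * C * (Y * C)ᴴ ≤ Y * Yᴴ :=
    calc Y * C * (Y * C)ᴴ = Y * (C * Cᴴ) * star Y := by
          rw [conjTranspose_mul, star_eq_conjTranspose]
          simp only [Matrix.mul_assoc]
      _ ≤ Y * 1 * star Y := star_right_conjugate_le_conjugate hC Y
      _ = Y * Yᴴ := by rw [Matrix.mul_one, star_eq_conjTranspose]
  calc traceNorm (Xᴴ * Y) = (Y * C * Xᴴ).trace.re := by
        rw [← hCXY, ← Matrix.mul_assoc, trace_mul_comm (C * Xᴴ), ← Matrix.mul_assoc]
    _ ≤ √(Y * C * (Y * C)ᴴ).trace.re * √(X * Xᴴ).trace.re :=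
        re_trace_mul_conjTranspose_le (Y * C) X
    _ ≤ √(X * Xᴴ).trace.re * √(Y * Yᴴ).trace.re := by
        rw [mul_comm]
        exact mul_le_mul_of_nonneg_left (Real.sqrt_le_sqrt (re_trace_mono hYC)) (Real.sqrt_nonneg _)

lemma fid_eq_traceNorm {X : Matrix (Fin d) (Fin d) ℂ} (hX : 0 ≤ X) (σ : Matrix (Fin d) (Fin d) ℂ) :
    fid X σ = traceNorm (psqrt X * psqrt σ) := by
  have hconj : (CFC.sqrt X * CFC.sqrt σ)ᴴ * (CFC.sqrt X * CFC.sqrt σ) =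
      CFC.sqrt σ * X * CFC.sqrt σ := by
    rw [conjTranspose_mul, conjTranspose_sqrt, conjTranspose_sqrt, ← Matrix.mul_assoc,
      Matrix.mul_assoc (CFC.sqrt σ), CFC.sqrt_mul_sqrt_self X hX]
  simp only [fid, traceNorm, psqrt_eq_sqrt, hconj]

lemma fid_mono {X Y : Matrix (Fin d) (Fin d) ℂ} (σ : Matrix (Fin d) (Fin d) ℂ) (h : X ≤ Y) :
    fid X σ ≤ fid Y σ := by
  have hconj := star_left_conjugate_le_conjugate h (CFC.sqrt σ)
  rw [star_eq_conjTranspose, conjTranspose_sqrt] at hconj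
  simp only [fid, psqrt_eq_sqrt]
  exact re_trace_mono (CFC.sqrt_le_sqrt _ _ hconj)

theorem fid_le_fid_mul_mul_add {ρ σ P : Matrix (Fin d) (Fin d) ℂ} (hρ : 0 ≤ ρ) (hσ : 0 ≤ σ)
    (hP : IsStarProjection P) (hPρ : Commute P ρ) :
    fid ρ σ ≤ fid (P * ρ * P) σ +
      √((1 - P) * ρ * (1 - P)).trace.re * √((1 - P) * σ * (1 - P)).trace.re := by
  set R := CFC.sqrt ρ
  set T := CFC.sqrt σ
  have hP' := hP.one_sub
  have hP'H : (1 - P)ᴴ = 1 - P := hP'.isSelfAdjoint.star_eq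
  have hP'R : Commute (1 - P) R := (((Commute.one_left ρ).sub_left hPρ).symm.cfcₙ_nnreal _).symm
  have hPρP : 0 ≤ P * ρ * P := by
    simpa only [hP.isSelfAdjoint.star_eq] using star_left_conjugate_nonneg hρ P
  have hsplit : R * T = P * R * T + (1 - P) * R * T := by
    rw [← Matrix.add_mul, ← Matrix.add_mul, add_sub_cancel, Matrix.one_mul]
  have hrest : ((1 - P) * R)ᴴ * ((1 - P) * T) = (1 - P) * R * T := by
    rw [conjTranspose_mul, conjTranspose_sqrt, hP'H, Matrix.mul_assoc,
      ← Matrix.mul_assoc (1 - P) (1 - P), hP'.isIdempotentElem.eq, ← Matrix.mul_assoc,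
      ← hP'R.eq]
  have hsq (S : Matrix (Fin d) (Fin d) ℂ) (hS : 0 ≤ S) :
      (1 - P) * CFC.sqrt S * ((1 - P) * CFC.sqrt S)ᴴ = (1 - P) * S * (1 - P) := by
    rw [conjTranspose_mul, conjTranspose_sqrt, hP'H, Matrix.mul_assoc,
      ← Matrix.mul_assoc (CFC.sqrt S), CFC.sqrt_mul_sqrt_self S hS, ← Matrix.mul_assoc]
  calc fid ρ σ = traceNorm (R * T) := by rw [fid_eq_traceNorm hρ, psqrt_eq_sqrt, psqrt_eq_sqrt]
    _ ≤ traceNorm (P * R * T) + traceNorm ((1 - P) * R * T) :=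
        hsplit ▸ traceNorm_add_le _ _
    _ ≤ _ := by
        rw [← hrest, fid_eq_traceNorm hPρP, psqrt_eq_sqrt, psqrt_eq_sqrt,
          CFC.sqrt_mul_mul_eq_mul_sqrt hρ hP hPρ, ← hsq ρ hρ, ← hsq σ hσ]
        exact add_le_add le_rfl (traceNorm_conjTranspose_mul_le _ _)

end TraceNorm

theorem soft_truncation_error_general {d : ℕ} (ρ σ : Matrix (Fin d) (Fin d) ℂ)
    (hρ : ρ.PosSemidef) (hσ : σ.PosSemidef)
    (β : ℝ)
    (f : ℝ → ℝ) (hf01 : ∀ x, f x ∈ Set.Icc (0 : ℝ) 1)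
    (hf1 : ∀ x, β ≤ x → f x = 1) :
    fid ρ σ - fid (hρ.1.cfc f * ρ) σ
      ≤ Real.sqrt ((hρ.1.cfc ((Set.Ico 0 β).indicator 1) * ρ
            * hρ.1.cfc ((Set.Ico 0 β).indicator 1)).trace.re)
        * Real.sqrt ((hρ.1.cfc ((Set.Ico 0 β).indicator 1) * σ
            * hρ.1.cfc ((Set.Ico 0 β).indicator 1)).trace.re) := by
  set p : ℝ → ℝ := (Set.Ico 0 β).indicator 1
  set P := hρ.1.cfc p
  have hP : IsStarProjection P := by
    refine ⟨?_, (hρ.1.isHermitian_cfc p).isSelfAdjoint⟩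
    rw [IsIdempotentElem, hρ.1.cfc_mul]
    congr 1
    funext x
    by_cases hx : x ∈ Set.Ico 0 β <;> simp [p, hx]
  have hPρ : Commute P ρ := by
    rw [show P = cfc p ρ from (hρ.1.cfc_eq p).symm]
    exact (Commute.refl ρ).cfc_real p
  have hmono : (1 - P) * ρ * (1 - P) ≤ hρ.1.cfc f * ρ := by
    rw [← hρ.1.cfc_one, hρ.1.cfc_sub, hρ.1.cfc_mul_mul_cfc, hρ.1.cfc_mul_self]
    refine hρ.cfc_le_cfc fun x hx => ?_
    by_cases hxβ : x < β
    · simpa [p, hx, hxβ] using mul_nonneg (hf01 x).1 hx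
    · simp [p, hf1 x (not_lt.mp hxβ), hxβ]
  have htrunc := fid_le_fid_mul_mul_add hρ.nonneg hσ.nonneg hP.one_sub
    ((Commute.one_left ρ).sub_left hPρ)
  rw [sub_sub_cancel] at htrunc
  linarith [fid_mono σ hmono]

theorem soft_truncation_error {d : ℕ} (ρ σ : Matrix (Fin d) (Fin d) ℂ)
    (hρ : ρ.PosSemidef) (hσ : σ.PosSemidef)
    (hρ1 : ρ.trace = 1) (hσ1 : σ.trace = 1)
    (α β : ℝ) (hα : 0 ≤ α) (hαβ : α ≤ β) (hβ : β ∈ Set.Ioc (0 : ℝ) 1)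
    (f : ℝ → ℝ) (hf01 : ∀ x, f x ∈ Set.Icc (0 : ℝ) 1)
    (hf0 : ∀ x, x < α → f x = 0) (hf1 : ∀ x, β ≤ x → f x = 1) :
    fid ρ σ - fid (hρ.1.cfc f * ρ) σ
      ≤ Real.sqrt ((hρ.1.cfc ((Set.Ico 0 β).indicator 1) * ρ
            * hρ.1.cfc ((Set.Ico 0 β).indicator 1)).trace.re)
        * Real.sqrt ((hρ.1.cfc ((Set.Ico 0 β).indicator 1) * σ
            * hρ.1.cfc ((Set.Ico 0 β).indicator 1)).trace.re) :=
  soft_truncation_error_general ρ σ hρ hσ β f hf01 hf1
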